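/- arXiv:2106.12575 — 6 statements merged into one kernel-verified Lean document; each statement's English description precedes it below -/
import Mathlib

section
/- Consider colour refinement on regular cell complexes where the full update is a^{t+1}_σ = HASH(a^t_σ, a^t_B(σ), a^t_C(σ), a^t_↓(σ), a^t_↑(σ)) and the restricted update is b^{t+1}_σ = HASH'(b^t_σ, b^t_B(σ), b^t_↓(σ), b^t_↑(σ)), both starting from constant colourings with injective hash functions. Then for all t, the colouring b^{t+1} refines a^t: for any cells σ, τ in any complexes, b^{t+1}_σ = b^{t+1}_τ implies a^t_σ = a^t_τ. -/
/-- A combinatorial model of a (regular) cell complex: a finite set of cells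
with a covering (boundary) relation `covers σ τ` meaning "σ ≺ τ". -/
structure CC where
  Cell : Type
  fin : Fintype Cell
  deq : DecidableEq Cell
  covers : Cell → Cell → Prop
  dec : DecidableRel covers

attribute [instance] CC.fin CC.deq CC.dec

/-- The boundary `B(σ) = {τ | τ ≺ σ}`. -/
def CC.bd (X : CC) (σ : X.Cell) : Finset X.Cell :=
  Finset.univ.filter (fun τ => X.covers τ σ)

/-- The coboundary `C(σ) = {τ | σ ≺ τ}`. -/
def CC.cobd (X : CC) (σ : X.Cell) : Finset X.Cell :=
  Finset.univ.filter (fun τ => X.covers σ τ)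

/-- Multiset of colours of the boundary cells of `σ`. -/
def cB {Colour : Type} (X : CC) (c : X.Cell → Colour) (σ : X.Cell) : Multiset Colour :=
  (X.bd σ).val.map c

/-- Multiset of colours of the coboundary cells of `σ`. -/
def cC {Colour : Type} (X : CC) (c : X.Cell → Colour) (σ : X.Cell) : Multiset Colour :=
  (X.cobd σ).val.map c

/-- Upper-adjacency colour multiset: pairs `(c τ, c δ)` over `τ ∈ N↑(σ)`,
`δ ∈ C(σ) ∩ C(τ)`, i.e. pairs `(τ, δ)` with `σ ≺ δ` and `τ ≺ δ`. -/
def cUp {Colour : Type} (X : CC) (c : X.Cell → Colour) (σ : X.Cell) :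
    Multiset (Colour × Colour) :=
  ((Finset.univ ×ˢ Finset.univ).filter
    (fun p : X.Cell × X.Cell => X.covers σ p.2 ∧ X.covers p.1 p.2)).val.map
      (fun p => (c p.1, c p.2))

/-- Lower-adjacency colour multiset: pairs `(c τ, c δ)` over `τ ∈ N↓(σ)`,
`δ ∈ B(σ) ∩ B(τ)`, i.e. pairs `(τ, δ)` with `δ ≺ σ` and `δ ≺ τ`. -/
def cDown {Colour : Type} (X : CC) (c : X.Cell → Colour) (σ : X.Cell) :
    Multiset (Colour × Colour) :=
  ((Finset.univ ×ˢ Finset.univ).filter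
    (fun p : X.Cell × X.Cell => X.covers p.2 σ ∧ X.covers p.2 p.1)).val.map
      (fun p => (c p.1, c p.2))

/-- Colour histogram of a complex. -/
def histo {Colour : Type} (X : CC) (c : X.Cell → Colour) : Multiset Colour :=
  Finset.univ.val.map c

/-- CWL with the complete set of adjacencies: constant initialisation and
injective-hash update `c^{t+1}_σ = HASH(c^t_σ, c_B, c_C, c_↓, c_↑)`, captured by
the iff (determinism + injectivity of the hash). -/
def IsCWLFull {Colour : Type} (c : ∀ X : CC, ℕ → X.Cell → Colour) : Prop :=
  (∀ (X Y : CC) (σ : X.Cell) (τ : Y.Cell), c X 0 σ = c Y 0 τ) ∧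
  (∀ (X Y : CC) (σ : X.Cell) (τ : Y.Cell) (t : ℕ),
    c X (t + 1) σ = c Y (t + 1) τ ↔
      (c X t σ = c Y t τ ∧ cB X (c X t) σ = cB Y (c Y t) τ ∧
        cC X (c X t) σ = cC Y (c Y t) τ ∧
        cDown X (c X t) σ = cDown Y (c Y t) τ ∧
        cUp X (c X t) σ = cUp Y (c Y t) τ))

/-- CWL without coboundary adjacencies:
`c^{t+1}_σ = HASH(c^t_σ, c_B, c_↓, c_↑)`. -/
def IsCWLNoCobd {Colour : Type} (c : ∀ X : CC, ℕ → X.Cell → Colour) : Prop :=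
  (∀ (X Y : CC) (σ : X.Cell) (τ : Y.Cell), c X 0 σ = c Y 0 τ) ∧
  (∀ (X Y : CC) (σ : X.Cell) (τ : Y.Cell) (t : ℕ),
    c X (t + 1) σ = c Y (t + 1) τ ↔
      (c X t σ = c Y t τ ∧ cB X (c X t) σ = cB Y (c Y t) τ ∧
        cDown X (c X t) σ = cDown Y (c Y t) τ ∧
        cUp X (c X t) σ = cUp Y (c Y t) τ))

/-- CWL with only boundary and upper adjacencies:
`c^{t+1}_σ = HASH(c^t_σ, c_B, c_↑)`. -/
def IsCWLBU {Colour : Type} (c : ∀ X : CC, ℕ → X.Cell → Colour) : Prop :=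
  (∀ (X Y : CC) (σ : X.Cell) (τ : Y.Cell), c X 0 σ = c Y 0 τ) ∧
  (∀ (X Y : CC) (σ : X.Cell) (τ : Y.Cell) (t : ℕ),
    c X (t + 1) σ = c Y (t + 1) τ ↔
      (c X t σ = c Y t τ ∧ cB X (c X t) σ = cB Y (c Y t) τ ∧
        cUp X (c X t) σ = cUp Y (c Y t) τ))


/-! The only information `a` uses that `b` does not see directly is the coboundary multiset, and it
can be read off the upper-adjacency multiset: a coboundary cell `δ` of `σ` occurs as the second
component of exactly `|B(δ)| > 0` pairs, and already after one round the `b`-colour of a cell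
determines the size of its boundary (through the boundary multiset). Dividing the multiplicity
of each colour by that size recovers `b_C`, and an induction on `t` finishes. -/

lemma Multiset.map_eq_map_of_refines {α β γ δ : Type} {s : Multiset α} {t : Multiset β}
    {c : α → γ} {d : β → γ} {c' : α → δ} {d' : β → δ} (h : s.map c = t.map d)
    (hr : ∀ x y, c x = d y → c' x = d' y) : s.map c' = t.map d' := by
  rw [← Multiset.rel_eq, Multiset.rel_map] at h ⊢
  exact h.mono fun x _ y _ => hr x y

lemma CC.mem_bd_of_mem_cobd {X : CC} {σ δ : X.Cell} (h : δ ∈ X.cobd σ) : σ ∈ X.bd δ := by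
  simp_all [CC.bd, CC.cobd]

section
variable {α : Type} {X : CC} {c : X.Cell → α} {k : α → ℕ}

lemma count_map_snd_cUp [DecidableEq α] (hk : ∀ δ, (X.bd δ).card = k (c δ))
    (σ : X.Cell) (y : α) :
    ((cUp X c σ).map Prod.snd).count y = (cC X c σ).count y * k y := by
  have fiber : ∀ δ, (∑ τ, if (X.covers σ δ ∧ X.covers τ δ) ∧ y = c δ then 1 else 0)
      = if X.covers σ δ ∧ y = c δ then k y else 0 := by
    intro δ
    split_ifs with hδ
    · rw [hδ.2, ← hk, CC.bd, Finset.card_filter]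
      simp only [hδ, true_and, and_true]
    · exact Finset.sum_eq_zero fun τ _ => if_neg (by tauto)
  simp only [cUp, cC, Multiset.map_map, Function.comp_def, Multiset.count_map]
  rw [← Finset.filter_val, ← Finset.filter_val, Finset.card_val, Finset.card_val,
    Finset.filter_filter, Finset.card_filter, Finset.sum_product_right,
    Finset.sum_congr rfl fun δ _ => fiber δ,
    ← Finset.sum_filter, Finset.sum_const, smul_eq_mul, CC.cobd, Finset.filter_filter]

lemma pos_of_mem_cC (hk : ∀ δ, (X.bd δ).card = k (c δ)) {σ : X.Cell} {y : α}
    (hy : y ∈ cC X c σ) : 0 < k y := by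
  obtain ⟨δ, hδ, rfl⟩ := Multiset.mem_map.mp hy
  rw [← hk]
  exact Finset.card_pos.mpr ⟨σ, CC.mem_bd_of_mem_cobd hδ⟩

end

lemma cC_eq_of_cUp_eq {α : Type} {X Y : CC} {c : X.Cell → α} {d : Y.Cell → α} (k : α → ℕ)
    (hc : ∀ δ, (X.bd δ).card = k (c δ)) (hd : ∀ δ, (Y.bd δ).card = k (d δ))
    {σ : X.Cell} {τ : Y.Cell} (h : cUp X c σ = cUp Y d τ) : cC X c σ = cC Y d τ := by
  classical
  ext y
  have hcount : (cC X c σ).count y * k y = (cC Y d τ).count y * k y := by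
    rw [← count_map_snd_cUp hc, ← count_map_snd_cUp hd, h]
  rcases Nat.eq_zero_or_pos (k y) with hy | hy
  · have not_mem {Z : CC} {e : Z.Cell → α} (he : ∀ δ, (Z.bd δ).card = k (e δ)) (ρ : Z.Cell) :
        y ∉ cC Z e ρ := fun hmem => (pos_of_mem_cC he hmem).ne' hy
    rw [Multiset.count_eq_zero_of_notMem (not_mem hc σ),
      Multiset.count_eq_zero_of_notMem (not_mem hd τ)]
  · exact Nat.eq_of_mul_eq_mul_right hy hcount

lemma exists_bd_card_eq_comp {α : Type} {c : ∀ X : CC, X.Cell → α}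
    (hc : ∀ (X Y : CC) (σ : X.Cell) (τ : Y.Cell),
      c X σ = c Y τ → (X.bd σ).card = (Y.bd τ).card) :
    ∃ k : α → ℕ, ∀ (X : CC) (σ : X.Cell), (X.bd σ).card = k (c X σ) := by
  let colour : (Σ X : CC, X.Cell) → α := fun p => c p.1 p.2
  let size : (Σ X : CC, X.Cell) → ℕ := fun p => (p.1.bd p.2).card
  have hfac : size.FactorsThrough colour := fun p q h => hc p.1 q.1 p.2 q.2 h
  exact ⟨Function.extend colour size 0, fun X σ => (hfac.extend_apply 0 ⟨X, σ⟩).symm⟩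

section
variable {α β : Type} {X Y : CC} {c : X.Cell → α} {d : Y.Cell → α}
  {c' : X.Cell → β} {d' : Y.Cell → β} {σ : X.Cell} {τ : Y.Cell}

lemma cB_eq_of_refines (hr : ∀ x y, c x = d y → c' x = d' y) (h : cB X c σ = cB Y d τ) :
    cB X c' σ = cB Y d' τ :=
  Multiset.map_eq_map_of_refines h hr

lemma cC_eq_of_refines (hr : ∀ x y, c x = d y → c' x = d' y) (h : cC X c σ = cC Y d τ) :
    cC X c' σ = cC Y d' τ :=
  Multiset.map_eq_map_of_refines h hr

lemma cDown_eq_of_refines (hr : ∀ x y, c x = d y → c' x = d' y)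
    (h : cDown X c σ = cDown Y d τ) : cDown X c' σ = cDown Y d' τ :=
  Multiset.map_eq_map_of_refines h fun _ _ hp =>
    Prod.ext (hr _ _ (congrArg Prod.fst hp)) (hr _ _ (congrArg Prod.snd hp))

lemma cUp_eq_of_refines (hr : ∀ x y, c x = d y → c' x = d' y) (h : cUp X c σ = cUp Y d τ) :
    cUp X c' σ = cUp Y d' τ :=
  Multiset.map_eq_map_of_refines h fun _ _ hp =>
    Prod.ext (hr _ _ (congrArg Prod.fst hp)) (hr _ _ (congrArg Prod.snd hp))

end

lemma IsCWLNoCobd.bd_card_eq {α : Type} {b : ∀ X : CC, ℕ → X.Cell → α} (hb : IsCWLNoCobd b)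
    (t : ℕ) (X Y : CC) (σ : X.Cell) (τ : Y.Cell) (h : b X (t + 1) σ = b Y (t + 1) τ) :
    (X.bd σ).card = (Y.bd τ).card := by
  simpa [cB] using congrArg Multiset.card ((hb.2 X Y σ τ t).mp h).2.1

/-- With `a` the CWL colouring using the full update
(`HASH(a, a_B, a_C, a_↓, a_↑)`) and `b` the restricted one dropping the
coboundary multiset (`HASH'(b, b_B, b_↓, b_↑)`), both from constant
initialisations with injective hashes, `b^{t+1}` refines `a^t`. -/
theorem stmt_3 {Colour Colour' : Type}
    (a : ∀ X : CC, ℕ → X.Cell → Colour) (b : ∀ X : CC, ℕ → X.Cell → Colour')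
    (ha : IsCWLFull a) (hb : IsCWLNoCobd b) :
    ∀ (t : ℕ) (X Y : CC) (σ : X.Cell) (τ : Y.Cell),
      b X (t + 1) σ = b Y (t + 1) τ → a X t σ = a Y t τ := by
  intro t
  induction t with
  | zero => exact fun X Y σ τ _ => ha.1 X Y σ τ
  | succ t ih =>
    intro X Y σ τ h
    obtain ⟨hb₀, hB, hD, hU⟩ := (hb.2 X Y σ τ (t + 1)).mp h
    obtain ⟨k, hk⟩ := exists_bd_card_eq_comp (hb.bd_card_eq t)
    have hC := cC_eq_of_cUp_eq k (hk X) (hk Y) hU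
    exact (ha.2 X Y σ τ t).mpr ⟨ih X Y σ τ hb₀, cB_eq_of_refines (ih X Y) hB,
      cC_eq_of_refines (ih X Y) hC, cDown_eq_of_refines (ih X Y) hD,
      cUp_eq_of_refines (ih X Y) hU⟩
end

section
/- Let σ be a cell that is an n-simplex and τ a cell that is not an n-simplex, in regular cell complexes X and Y respectively. Then under CWL colour refinement (with injective hash of the cell's colour and the multisets of boundary and upper-adjacent colours, started from a constant colouring), c^t_σ ≠ c^t_τ for all t ≥ n + 1. -/
/-- `IsSimplex X n σ`: a 0-simplex is a cell with empty boundary, and an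
(n+1)-simplex is a cell with exactly `n + 2` boundary cells, all of which are
n-simplices. -/
def IsSimplex (X : CC) : ℕ → X.Cell → Prop
  | 0, σ => X.bd σ = ∅
  | n + 1, σ => (X.bd σ).card = n + 2 ∧ ∀ τ ∈ X.bd σ, IsSimplex X n τ

lemma cwl_step {Colour : Type} {c : ∀ X : CC, ℕ → X.Cell → Colour}
    (hc : IsCWLBU c) {X Y : CC} {σ : X.Cell} {τ : Y.Cell} {t : ℕ}
    (h : c X (t + 1) σ = c Y (t + 1) τ) : c X t σ = c Y t τ :=
  (((hc.2 X Y σ τ t).mp h)).1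

lemma cwl_mono {Colour : Type} {c : ∀ X : CC, ℕ → X.Cell → Colour}
    (hc : IsCWLBU c) {X Y : CC} {σ : X.Cell} {τ : Y.Cell} :
    ∀ {t s : ℕ}, s ≤ t → c X t σ = c Y t τ → c X s σ = c Y s τ := by
  intro t
  induction t with
  | zero => intro s hs h; rw [Nat.le_zero.mp hs]; exact h
  | succ t ih =>
    intro s hs h
    rcases Nat.lt_or_ge s (t + 1) with hlt | hge
    · exact ih (Nat.lt_succ_iff.mp hlt) (cwl_step hc h)
    · have : s = t + 1 := le_antisymm hs hge
      subst this; exact h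

lemma simplex_det {Colour : Type} {c : ∀ X : CC, ℕ → X.Cell → Colour}
    (hc : IsCWLBU c) : ∀ (n : ℕ) (X Y : CC) (σ : X.Cell) (τ : Y.Cell),
    c X (n + 1) σ = c Y (n + 1) τ → IsSimplex X n σ → IsSimplex Y n τ := by
  intro n
  induction n with
  | zero =>
    intro X Y σ τ h hσ
    have hB := ((hc.2 X Y σ τ 0).mp h).2.1
    simp only [IsSimplex] at hσ ⊢
    unfold cB at hB
    rw [hσ] at hB
    simp only [Finset.empty_val, Multiset.map_zero] at hB
    have : (Y.bd τ).val = 0 := Multiset.map_eq_zero.mp hB.symm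
    exact Finset.val_eq_zero.mp this
  | succ n ih =>
    intro X Y σ τ h hσ
    obtain ⟨hcard, hall⟩ := hσ
    have hB := ((hc.2 X Y σ τ (n + 1)).mp h).2.1
    unfold cB at hB
    constructor
    · have := congrArg Multiset.card hB
      simpa [hcard] using this.symm
    · intro τ' hτ'
      have hmem : c Y (n + 1) τ' ∈ (X.bd σ).val.map (c X (n + 1)) := by
        rw [hB]
        exact Multiset.mem_map_of_mem _ hτ'
      obtain ⟨σ', hσ'mem, hσ'eq⟩ := Multiset.mem_map.mp hmem
      exact ih X Y σ' τ' hσ'eq (hall σ' hσ'mem)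

/-- Under CWL refinement (by boundary and upper adjacencies, with
injective hash and constant initialisation), if `σ` is an n-simplex and `τ` is
not, then their colours differ for all `t ≥ n + 1`. -/
theorem stmt_5 {Colour : Type} (c : ∀ X : CC, ℕ → X.Cell → Colour)
    (hc : IsCWLBU c) (n : ℕ) (X Y : CC) (σ : X.Cell) (τ : Y.Cell)
    (hσ : IsSimplex X n σ) (hτ : ¬ IsSimplex Y n τ) :
    ∀ t : ℕ, n + 1 ≤ t → c X t σ ≠ c Y t τ := by
  intro t ht h
  exact hτ (simplex_det hc n X Y σ τ (cwl_mono hc ht h) hσ)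
end

section
/- For 0-cells of a regular cell complex whose 1-skeleton is a simple graph, the CWL refinement restricted to 0-cells refines WL on the underlying graph: if b^t denotes the CWL colouring and a^t the WL colouring of nodes (under the identification of 0-cells with graph vertices and with matching initialisations), then for all t and all 0-cells σ, τ in any two such complexes, b^t_σ = b^t_τ implies a^t_σ = a^t_τ. -/
/-- A graded cell complex: cells carry a dimension, and covering raises the
dimension by exactly one. -/
structure CCg extends CC where
  dim : Cell → ℕ
  hdim : ∀ σ τ, covers σ τ → dim τ = dim σ + 1

/-- The data of a skeleton-preserving lifting of a simple graph `G` into a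
graded cell complex `K`: a bijection `g` between the vertices of `G` and the
0-cells of `K`, such that the 1-cells of `K` with their boundary 0-cells form a
(simple) graph isomorphic to `G` via `g`. -/
structure SkeletonLift {V : Type} [Fintype V] [DecidableEq V]
    (G : SimpleGraph V) [DecidableRel G.Adj] (K : CCg) where
  g : V ≃ {σ : K.Cell // K.dim σ = 0}
  edge_boundary : ∀ e : K.Cell, K.dim e = 1 →
    ∃ v w, G.Adj v w ∧ K.bd e = {(g v).1, (g w).1}
  adj_edge : ∀ v w, G.Adj v w →
    ∃! e : K.Cell, K.dim e = 1 ∧ K.bd e = {(g v).1, (g w).1}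

section Helpers

variable {V : Type} [Fintype V] [DecidableEq V]
  {G : SimpleGraph V} [DecidableRel G.Adj] {K : CCg} (L : SkeletonLift G K)

lemma mem_bd_iff (X : CC) (τ δ : X.Cell) : τ ∈ X.bd δ ↔ X.covers τ δ := by
  simp [CC.bd]

lemma mem_cobd_iff (X : CC) (τ δ : X.Cell) : δ ∈ X.cobd τ ↔ X.covers τ δ := by
  simp [CC.cobd]

lemma gv_ne (v w : V) (h : v ≠ w) : (L.g v).1 ≠ (L.g w).1 := fun he =>
  h (L.g.injective (Subtype.ext he))

lemma pair_eq_aux {α : Type*} [DecidableEq α] {a x y : α} (hx : x ≠ a)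
    (h : ({a, x} : Finset α) = {a, y}) : x = y := by
  have hm : x ∈ ({a, y} : Finset α) := h ▸ (by simp)
  simp only [Finset.mem_insert, Finset.mem_singleton] at hm
  tauto

lemma key (v : V) {δ : K.Cell} (h : K.covers (L.g v).1 δ) :
    ∃! w, G.Adj v w ∧ K.bd δ = {(L.g v).1, (L.g w).1} := by
  have hd1 : K.dim δ = 1 := by rw [K.hdim _ _ h, (L.g v).2]
  obtain ⟨v', w', hadj, hbd⟩ := L.edge_boundary δ hd1
  have hσ : (L.g v).1 ∈ K.bd δ := (mem_bd_iff _ _ _).mpr h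
  rw [hbd] at hσ
  have hexists : ∃ w, G.Adj v w ∧ K.bd δ = {(L.g v).1, (L.g w).1} := by
    rcases Finset.mem_insert.mp hσ with h1 | h1
    · have hv : v = v' := L.g.injective (Subtype.ext h1)
      exact ⟨w', hv ▸ hadj, by rw [hbd, ← h1]⟩
    · have h1 : (L.g v).1 = (L.g w').1 := by simpa using h1
      have hv : v = w' := L.g.injective (Subtype.ext h1)
      exact ⟨v', hv ▸ hadj.symm, by rw [hbd, Finset.pair_comm, ← h1]⟩
  obtain ⟨w, hw⟩ := hexists
  refine ⟨w, hw, fun y hy => ?_⟩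
  have hpq := hy.2.symm.trans hw.2
  exact L.g.injective (Subtype.ext
    (pair_eq_aux (gv_ne L _ _ (G.ne_of_adj hy.1).symm) hpq))

noncomputable def nb (v : V) (δ : K.Cell) : V :=
  if h : K.covers (L.g v).1 δ then (key L v h).exists.choose else v

lemma nb_spec (v : V) {δ : K.Cell} (h : K.covers (L.g v).1 δ) :
    G.Adj v (nb L v δ) ∧ K.bd δ = {(L.g v).1, (L.g (nb L v δ)).1} := by
  rw [nb, dif_pos h]; exact (key L v h).exists.choose_spec

lemma nb_injOn (v : V) : Set.InjOn (nb L v) (K.toCC.cobd (L.g v).1) := by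
  intro δ1 h1 δ2 h2 he
  rw [Finset.mem_coe, mem_cobd_iff] at h1 h2
  obtain ⟨ha1, hb1⟩ := nb_spec L v h1
  obtain ⟨ha2, hb2⟩ := nb_spec L v h2
  have hd1 : K.dim δ1 = 1 := by rw [K.hdim _ _ h1, (L.g v).2]
  have hd2 : K.dim δ2 = 1 := by rw [K.hdim _ _ h2, (L.g v).2]
  exact (L.adj_edge v (nb L v δ1) ha1).unique ⟨hd1, hb1⟩ ⟨hd2, by rw [hb2, he]⟩

lemma nb_image (v : V) :
    (K.toCC.cobd (L.g v).1).image (nb L v) = G.neighborFinset v := by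
  ext w
  simp only [Finset.mem_image, SimpleGraph.mem_neighborFinset]
  constructor
  · rintro ⟨δ, hδ, rfl⟩
    exact (nb_spec L v ((mem_cobd_iff _ _ _).mp hδ)).1
  · intro hadj
    obtain ⟨e, ⟨hd1, hbd⟩, -⟩ := L.adj_edge v w hadj
    have hcov : K.covers (L.g v).1 e := by
      have hm : (L.g v).1 ∈ K.bd e := by rw [hbd]; simp
      exact (mem_bd_iff _ _ _).mp hm
    refine ⟨e, (mem_cobd_iff _ _ _).mpr hcov, ?_⟩
    obtain ⟨ha2, hb2⟩ := nb_spec L v hcov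
    have hpq := hbd.symm.trans hb2
    exact (L.g.injective (Subtype.ext
      (pair_eq_aux (gv_ne L _ _ (G.ne_of_adj hadj).symm) hpq))).symm

lemma cobd_card (v : V) : (K.toCC.cobd (L.g v).1).card = G.degree v := by
  rw [← SimpleGraph.card_neighborFinset_eq_degree, ← nb_image L v,
    Finset.card_image_of_injOn (nb_injOn L v)]

lemma fst_cUp {C : Type} (v : V) (c : K.Cell → C) :
    (cUp K.toCC c (L.g v).1).map Prod.fst =
      Multiset.replicate (G.degree v) (c (L.g v).1) +
        (G.neighborFinset v).val.map (fun w => c (L.g w).1) := by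
  classical
  set σ := (L.g v).1 with hσ
  have hdisj : (↑(K.toCC.cobd σ) : Set K.Cell).PairwiseDisjoint
      (fun δ => (K.toCC.bd δ).image (fun τ => (τ, δ))) := by
    intro δ1 _ δ2 _ hne
    simp only [Function.onFun, Finset.disjoint_left, Finset.mem_image]
    rintro ⟨τ, δ⟩ ⟨τ1, -, h1⟩ ⟨τ2, -, h2⟩
    exact hne ((congrArg Prod.snd h1).trans (congrArg Prod.snd h2).symm)
  have hset : ((Finset.univ ×ˢ Finset.univ).filter
      (fun p : K.Cell × K.Cell => K.toCC.covers σ p.2 ∧ K.toCC.covers p.1 p.2)) =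
      (K.toCC.cobd σ).disjiUnion (fun δ => (K.toCC.bd δ).image (fun τ => (τ, δ)))
        hdisj := by
    ext ⟨τ, δ⟩
    simp only [Finset.mem_filter, Finset.mem_product, Finset.mem_univ, true_and,
      Finset.mem_disjiUnion, Finset.mem_image, mem_cobd_iff, mem_bd_iff,
      Prod.mk.injEq]
    constructor
    · rintro ⟨h1, h2⟩; exact ⟨δ, h1, τ, h2, rfl, rfl⟩
    · rintro ⟨δ', h1, τ', h2, rfl, rfl⟩; exact ⟨h1, h2⟩
  have hcup : cUp K.toCC c σ = (K.toCC.cobd σ).val.bind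
      (fun δ => (K.toCC.bd δ).val.map (fun τ => (c τ, c δ))) := by
    rw [cUp, hset, Finset.disjiUnion_val, Multiset.map_bind]
    refine Multiset.bind_congr (fun δ _ => ?_)
    have hinj : Set.InjOn (fun τ => (τ, δ)) (↑(K.toCC.bd δ) : Set K.Cell) := by
      intro x _ y _ h; exact congrArg Prod.fst h
    rw [Finset.image_val_of_injOn hinj, Multiset.map_map]
    rfl
  rw [hcup, Multiset.map_bind]
  have hstep : ∀ δ ∈ (K.toCC.cobd σ).val,
      ((K.toCC.bd δ).val.map (fun τ => (c τ, c δ))).map Prod.fst =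
        {c σ} + {c (L.g (nb L v δ)).1} := by
    intro δ hδ
    have hcov : K.covers σ δ := (mem_cobd_iff _ _ _).mp hδ
    obtain ⟨hadj, hbd⟩ := nb_spec L v hcov
    have hne : σ ≠ (L.g (nb L v δ)).1 := gv_ne L _ _ (G.ne_of_adj hadj)
    rw [Multiset.map_map, hbd]
    have hval : ({σ, (L.g (nb L v δ)).1} : Finset K.Cell).val =
        σ ::ₘ {(L.g (nb L v δ)).1} := by
      rw [Finset.insert_val, Finset.singleton_val,
        Multiset.ndinsert_of_notMem (by simpa using hne)]
    rw [hval]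
    simp
  rw [Multiset.bind_congr hstep, Multiset.bind_add, Multiset.bind_singleton,
    Multiset.bind_singleton, Multiset.map_const']
  congr 1
  · exact congrArg (Multiset.replicate · _) (cobd_card L v)
  · have : (K.toCC.cobd σ).val.map (fun δ => c (L.g (nb L v δ)).1) =
        ((K.toCC.cobd σ).val.map (nb L v)).map (fun w => c (L.g w).1) := by
      rw [Multiset.map_map]; rfl
    rw [this, ← Finset.image_val_of_injOn (nb_injOn L v), nb_image L v]

lemma map_eq_of_map_eq {α β C D : Type*} {f : α → C} {f' : β → C}
    {h : α → D} {h' : β → D} {s : Multiset α} {t : Multiset β}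
    (H : ∀ x y, f x = f' y → h x = h' y)
    (he : s.map f = t.map f') : s.map h = t.map h' := by
  rw [← Multiset.rel_eq] at he ⊢
  rw [Multiset.rel_map] at he ⊢
  exact he.mono fun x _ y _ hxy => H x y hxy

end Helpers

/-- For 0-cells of regular cell complexes whose 1-skeletons are
simple graphs (given by skeleton-preserving lifts of graphs `Gr i`), the CWL
colouring `b` restricted to 0-cells refines the WL colouring `a` of the
corresponding graph vertices: `b^t_σ = b^t_τ → a^t` agrees on the matching
vertices, for all `t` and all 0-cells `σ, τ` in any two such complexes. -/
theorem stmt_7 {ι : Type} {V : ι → Type}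
    [∀ i, Fintype (V i)] [∀ i, DecidableEq (V i)]
    (Gr : ∀ i, SimpleGraph (V i)) [∀ i, DecidableRel (Gr i).Adj]
    (K : ι → CCg) (lift : ∀ i, SkeletonLift (Gr i) (K i))
    {Colour Colour' : Type}
    (a : ∀ i, ℕ → V i → Colour)
    (ha_init : ∀ i j (v : V i) (w : V j), a i 0 v = a j 0 w)
    (ha_upd : ∀ i j (v : V i) (w : V j) (t : ℕ),
      a i (t + 1) v = a j (t + 1) w ↔
        (a i t v = a j t w ∧
          ((Gr i).neighborFinset v).val.map (a i t) =
            ((Gr j).neighborFinset w).val.map (a j t)))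
    (b : ∀ X : CC, ℕ → X.Cell → Colour')
    (hb : IsCWLBU b) :
    ∀ i j (t : ℕ) (σ : {x : (K i).Cell // (K i).dim x = 0})
      (τ : {y : (K j).Cell // (K j).dim y = 0}),
      b (K i).toCC t σ.1 = b (K j).toCC t τ.1 →
      a i t ((lift i).g.symm σ) = a j t ((lift j).g.symm τ) := by
  intro i j t
  induction t with
  | zero => intro σ τ _; exact ha_init i j _ _
  | succ t ih =>
    intro σ τ hb1
    obtain ⟨hbt, -, hcup⟩ := (hb.2 _ _ _ _ t).mp hb1
    set v := (lift i).g.symm σ with hv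
    set w := (lift j).g.symm τ with hw
    have hσ : σ.1 = ((lift i).g v).1 := by rw [hv, Equiv.apply_symm_apply]
    have hτ : τ.1 = ((lift j).g w).1 := by rw [hw, Equiv.apply_symm_apply]
    rw [hσ, hτ] at hbt hcup
    have hfst := congrArg (Multiset.map Prod.fst) hcup
    rw [fst_cUp (lift i) v, fst_cUp (lift j) w] at hfst
    -- degrees are equal
    have hcard := congrArg Multiset.card hfst
    simp only [Multiset.card_add, Multiset.card_replicate, Multiset.card_map,
      Finset.card_val, SimpleGraph.card_neighborFinset_eq_degree] at hcard
    have hdeg : (Gr i).degree v = (Gr j).degree w := by omega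
    rw [hbt, hdeg] at hfst
    have hN := add_left_cancel hfst
    have hnbrs : ((Gr i).neighborFinset v).val.map (a i t) =
        ((Gr j).neighborFinset w).val.map (a j t) := by
      refine map_eq_of_map_eq (fun x y hxy => ?_) hN
      have := ih ((lift i).g x) ((lift j).g y) hxy
      rwa [Equiv.symm_apply_apply, Equiv.symm_apply_apply] at this
    exact (ha_upd i j v w t).mpr ⟨ih σ τ (by rwa [hσ, hτ]), hnbrs⟩
end

section
/- Decalin and Bicyclopentyl graphs are WL-indistinguishable but have different counts of induced cycles: the Decalin graph (two 6-cycles sharing an edge) contains induced cycles of length 6, whereas the Bicyclopentyl graph (two 5-cycles joined by a bridge edge) contains induced cycles of length 5 and no induced 6-cycles; hence a refinement recording induced cycle counts of size up to 6 distinguishes two graphs that WL cannot. -/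
open scoped Classical

/-- The Decalin graph: two hexagons (0,2,3,4,5,1) and (0,6,7,8,9,1) sharing
the edge {0,1}. -/
def decalin : SimpleGraph (Fin 10) :=
  SimpleGraph.fromRel (fun v w => (v.val, w.val) ∈
    [(0,1), (0,2), (2,3), (3,4), (4,5), (5,1), (0,6), (6,7), (7,8), (8,9), (9,1)])

/-- The Bicyclopentyl graph: two pentagons (0,1,2,3,4) and (5,6,7,8,9)
joined by the bridge edge {0,5}. -/
def bicyclopentyl : SimpleGraph (Fin 10) :=
  SimpleGraph.fromRel (fun v w => (v.val, w.val) ∈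
    [(0,1), (1,2), (2,3), (3,4), (4,0), (5,6), (6,7), (7,8), (8,9), (9,5), (0,5)])

/-- `s` is an induced cycle (ring) of length `k` in `G`. -/
def IsInducedCycle {V : Type} (G : SimpleGraph V) (s : Finset V) (k : ℕ) : Prop :=
  s.card = k ∧ Nonempty (G.induce ↑s ≃g SimpleGraph.cycleGraph k)

/- ### Auxiliary material -/

instance decalin.instDecidableRelAdj : DecidableRel decalin.Adj := fun v w =>
  decidable_of_iff _ ((SimpleGraph.fromRel_adj _ v w).symm : _ ↔ decalin.Adj v w)

instance bicyclopentyl.instDecidableRelAdj : DecidableRel bicyclopentyl.Adj := fun v w =>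
  decidable_of_iff _ ((SimpleGraph.fromRel_adj _ v w).symm : _ ↔ bicyclopentyl.Adj v w)

/-- The two graphs, indexed by a boolean. -/
def wlG : Bool → SimpleGraph (Fin 10) := fun b => bif b then decalin else bicyclopentyl

instance wlG.instDecidableRelAdj : ∀ b, DecidableRel (wlG b).Adj := fun b => by
  cases b
  · exact bicyclopentyl.instDecidableRelAdj
  · exact decalin.instDecidableRelAdj

/-- The stable WL colour classes for both graphs. -/
def wlCl : Bool → Fin 10 → Fin 3
  | true  => ![0, 0, 1, 2, 2, 1, 1, 2, 2, 1]
  | false => ![0, 1, 2, 2, 1, 0, 1, 2, 2, 1]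

/-- The multiset of classes in the neighbourhood of a vertex of each class. -/
def wlNbhd : Fin 3 → Multiset (Fin 3) := ![{0, 1, 1}, {0, 2}, {1, 2}]

/-- Representatives of each class inside the decalin graph. -/
def wlRep : Fin 3 → Fin 10 := ![0, 2, 3]

lemma wlRep_cl : ∀ a : Fin 3, wlCl true (wlRep a) = a := by decide

lemma wlNbhd_key' : ∀ (i : Bool) (v : Fin 10),
    ((wlG i).neighborFinset v).val.map (wlCl i) = wlNbhd (wlCl i v) := by decide

lemma wlNbhd_key (i : Bool) (v : Fin 10)
    (inst : Fintype ((bif i then decalin else bicyclopentyl :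
      SimpleGraph (Fin 10)).neighborSet v)) :
    (@SimpleGraph.neighborFinset _ (bif i then decalin else bicyclopentyl) v inst).val.map
      (wlCl i) = wlNbhd (wlCl i v) := by
  rw [Subsingleton.elim inst (SimpleGraph.neighborSetFintype (wlG i) v)]
  exact wlNbhd_key' i v

lemma wlUniv_key : Finset.univ.val.map (wlCl true) = Finset.univ.val.map (wlCl false) := by
  decide

/- ### Induced cycles -/

def sDec : Finset (Fin 10) := {0, 1, 2, 3, 4, 5}
def gDec : Fin 6 → Fin 10 := ![0, 2, 3, 4, 5, 1]
def fDec : Fin 10 → Fin 6 := ![0, 5, 1, 2, 3, 4, 0, 0, 0, 0]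

lemma gDec_mem : ∀ k, gDec k ∈ sDec := by decide
lemma gfDec : ∀ v ∈ sDec, gDec (fDec v) = v := by decide
lemma fgDec : ∀ k, fDec (gDec k) = k := by decide
lemma adjDec : ∀ v ∈ sDec, ∀ w ∈ sDec,
    ((SimpleGraph.cycleGraph 6).Adj (fDec v) (fDec w) ↔ decalin.Adj v w) := by decide

def sBic : Finset (Fin 10) := {0, 1, 2, 3, 4}
def gBic : Fin 5 → Fin 10 := ![0, 1, 2, 3, 4]
def fBic : Fin 10 → Fin 5 := ![0, 1, 2, 3, 4, 0, 0, 0, 0, 0]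

lemma gBic_mem : ∀ k, gBic k ∈ sBic := by decide
lemma gfBic : ∀ v ∈ sBic, gBic (fBic v) = v := by decide
lemma fgBic : ∀ k, fBic (gBic k) = k := by decide
lemma adjBic : ∀ v ∈ sBic, ∀ w ∈ sBic,
    ((SimpleGraph.cycleGraph 5).Adj (fBic v) (fBic w) ↔ bicyclopentyl.Adj v w) := by decide

def isoDec : decalin.induce ↑sDec ≃g SimpleGraph.cycleGraph 6 where
  toFun x := fDec x.1
  invFun k := ⟨gDec k, gDec_mem k⟩
  left_inv x := Subtype.ext (gfDec x.1 x.2)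
  right_inv k := fgDec k
  map_rel_iff' := @fun a b => (adjDec a.1 a.2 b.1 b.2).trans Iff.rfl

def isoBic : bicyclopentyl.induce ↑sBic ≃g SimpleGraph.cycleGraph 5 where
  toFun x := fBic x.1
  invFun k := ⟨gBic k, gBic_mem k⟩
  left_inv x := Subtype.ext (gfBic x.1 x.2)
  right_inv k := fgBic k
  map_rel_iff' := @fun a b => (adjBic a.1 a.2 b.1 b.2).trans Iff.rfl

/- ### No induced 6-cycle in bicyclopentyl -/

/-- Combine two boolean functions on `Fin 5` to one on `Fin 10`. -/
def combF (p q : Fin 5 → Bool) : Fin 10 → Bool := fun v =>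
  if h : v.val < 5 then p ⟨v.val, h⟩ else q ⟨v.val - 5, by omega⟩

set_option maxRecDepth 10000 in
lemma noSixBool : ∀ p q : Fin 5 → Bool,
    (Finset.univ.filter (fun v => combF p q v = true)).card = 6 →
    ¬ ∀ v : Fin 10, combF p q v = true →
      (Finset.univ.filter
        (fun w => combF p q w = true ∧ bicyclopentyl.Adj v w)).card = 2 := by
  decide

lemma induce_degree_filter {G : SimpleGraph (Fin 10)} [DecidableRel G.Adj]
    (s : Finset (Fin 10)) (v : Fin 10) (hv : v ∈ (↑s : Set (Fin 10))) :
    Fintype.card ((G.induce ↑s).neighborSet ⟨v, hv⟩) = (s.filter (G.Adj v)).card := by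
  classical
  have e : ((G.induce ↑s).neighborSet ⟨v, hv⟩) ≃
      {w : Fin 10 // w ∈ s.filter (G.Adj v)} :=
    { toFun := fun x => ⟨x.1.1, by
        have hx := x.2
        simp only [SimpleGraph.mem_neighborSet, SimpleGraph.comap_adj,
          Function.Embedding.coe_subtype] at hx
        exact Finset.mem_filter.mpr ⟨Finset.mem_coe.mp x.1.2, hx⟩⟩
      invFun := fun y => ⟨⟨y.1, Finset.mem_coe.mpr (Finset.mem_filter.mp y.2).1⟩, by
        simp only [SimpleGraph.mem_neighborSet, SimpleGraph.comap_adj,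
          Function.Embedding.coe_subtype]
        exact (Finset.mem_filter.mp y.2).2⟩
      left_inv := fun x => by ext; rfl
      right_inv := fun y => by ext; rfl }
  rw [Fintype.card_congr e]
  exact Fintype.card_coe _

theorem noSix : ¬ ∃ s : Finset (Fin 10), IsInducedCycle bicyclopentyl s 6 := by
  rintro ⟨s, hcard, ⟨e⟩⟩
  have hdeg : ∀ v ∈ s, (s.filter (bicyclopentyl.Adj v)).card = 2 := by
    intro v hv
    have hv' : v ∈ (↑s : Set (Fin 10)) := hv
    have h1 : Fintype.card ((bicyclopentyl.induce ↑s).neighborSet ⟨v, hv'⟩) = 2 := by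
      rw [Fintype.card_congr (e.mapNeighborSet ⟨v, hv'⟩)]
      have h2 := SimpleGraph.cycleGraph_degree_three_le (n := 3) (v := e ⟨v, hv'⟩)
      rw [← SimpleGraph.card_neighborSet_eq_degree] at h2
      convert h2
    rw [induce_degree_filter s v hv'] at h1
    convert h1 using 2
  -- transfer to the boolean world
  set p : Fin 5 → Bool := fun a => decide ((⟨a.val, by omega⟩ : Fin 10) ∈ s) with hp
  set q : Fin 5 → Bool := fun a => decide ((⟨a.val + 5, by omega⟩ : Fin 10) ∈ s) with hq
  have hcomb : ∀ v : Fin 10, combF p q v = true ↔ v ∈ s := by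
    intro v
    unfold combF
    split
    · rename_i h
      have : (⟨(⟨v.val, h⟩ : Fin 5).val, by omega⟩ : Fin 10) = v := by
        apply Fin.ext; simp
      rw [hp]; simp only [decide_eq_true_eq]; try rw [this]
    · rename_i h
      have : (⟨(⟨v.val - 5, by omega⟩ : Fin 5).val + 5, by omega⟩ : Fin 10) = v := by
        apply Fin.ext; simp; omega
      rw [hq]; simp only [decide_eq_true_eq]; try rw [this]
  have h1 : (Finset.univ.filter (fun v => combF p q v = true)) = s := by
    ext v; simp [hcomb]
  refine noSixBool p q (by rw [h1]; exact hcard) ?_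
  intro v hv
  have hvs : v ∈ s := (hcomb v).mp hv
  have h2 : Finset.univ.filter (fun w => combF p q w = true ∧ bicyclopentyl.Adj v w)
      = s.filter (bicyclopentyl.Adj v) := by
    ext w; simp [hcomb, Finset.mem_filter]
  rw [h2]
  exact hdeg v hvs

/- ### Main theorem -/

/-- Decalin and Bicyclopentyl are WL-indistinguishable (for any
WL colour refinement run jointly on both graphs the colour histograms agree at
every iteration), yet Decalin contains an induced 6-cycle while Bicyclopentyl
contains an induced 5-cycle and no induced 6-cycle; hence recording induced
cycle counts up to size 6 distinguishes them. -/
theorem stmt_11 {Colour : Type}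
    (G : Bool → SimpleGraph (Fin 10))
    (hG : G = fun b => bif b then decalin else bicyclopentyl)
    (c : Bool → ℕ → Fin 10 → Colour)
    (hinit : ∀ i j (v w : Fin 10), c i 0 v = c j 0 w)
    (hupd : ∀ i j (v w : Fin 10) (t : ℕ),
      c i (t + 1) v = c j (t + 1) w ↔
        (c i t v = c j t w ∧
          ((G i).neighborFinset v).val.map (c i t) =
            ((G j).neighborFinset w).val.map (c j t))) :
    (∀ t : ℕ,
      Finset.univ.val.map (c true t) = Finset.univ.val.map (c false t)) ∧
    (∃ s : Finset (Fin 10), IsInducedCycle decalin s 6) ∧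
    (∃ s : Finset (Fin 10), IsInducedCycle bicyclopentyl s 5) ∧
    (¬ ∃ s : Finset (Fin 10), IsInducedCycle bicyclopentyl s 6) := by
  subst hG
  have main : ∀ t : ℕ, ∀ i j (v w : Fin 10),
      wlCl i v = wlCl j w → c i t v = c j t w := by
    intro t
    induction t with
    | zero => intro i j v w _; exact hinit i j v w
    | succ t ih =>
      intro i j v w h
      rw [hupd]
      refine ⟨ih i j v w h, ?_⟩
      have hf : ∀ (i : Bool) (v : Fin 10), c i t v = c true t (wlRep (wlCl i v)) :=
        fun i v => ih i true v (wlRep (wlCl i v)) (wlRep_cl (wlCl i v)).symm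
      have key : ∀ (i : Bool) (v : Fin 10),
          ((bif i then decalin else bicyclopentyl : SimpleGraph (Fin 10)).neighborFinset v).val.map
              (c i t)
            = (wlNbhd (wlCl i v)).map (fun a => c true t (wlRep a)) := by
        intro i v
        have step1 : ((bif i then decalin else bicyclopentyl : SimpleGraph (Fin 10)).neighborFinset
              v).val.map (c i t)
            = (((bif i then decalin else bicyclopentyl : SimpleGraph (Fin 10)).neighborFinset
              v).val.map (wlCl i)).map (fun a => c true t (wlRep a)) := by
          rw [Multiset.map_map]
          exact Multiset.map_congr rfl (fun x _ => hf i x)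
        rw [step1, wlNbhd_key i v]
      rw [key i v, key j w, h]
  refine ⟨?_, ⟨sDec, rfl, ⟨isoDec⟩⟩, ⟨sBic, rfl, ⟨isoBic⟩⟩, noSix⟩
  intro t
  have hf : ∀ (i : Bool) (v : Fin 10), c i t v = c true t (wlRep (wlCl i v)) :=
    fun i v => main t i true v (wlRep (wlCl i v)) (wlRep_cl (wlCl i v)).symm
  have key : ∀ i : Bool, Finset.univ.val.map (c i t)
      = (Finset.univ.val.map (wlCl i)).map (fun a => c true t (wlRep a)) := by
    intro i
    rw [Multiset.map_map]
    exact Multiset.map_congr rfl (fun x _ => hf i x)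
  rw [key true, key false, wlUniv_key]
end

section
/- The Shrikhande graph contains an induced cycle of length 5, while the Rook's 4×4 graph contains no induced cycle of length 5. -/
open scoped Classical

/-- The Rook's 4×4 graph: `(a,b)` adjacent to `(c,d)` iff
`(a = c ∧ b ≠ d) ∨ (b = d ∧ a ≠ c)`. -/
def rook : SimpleGraph (Fin 4 × Fin 4) :=
  SimpleGraph.fromRel (fun x y => (x.1 = y.1 ∧ x.2 ≠ y.2) ∨ (x.2 = y.2 ∧ x.1 ≠ y.1))

/-- The Shrikhande graph: the Cayley graph of `Z₄ × Z₄` with connection set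
`{±(1,0), ±(0,1), ±(1,1)}` (symmetrised by `fromRel`). -/
def shrikhande : SimpleGraph (ZMod 4 × ZMod 4) :=
  SimpleGraph.fromRel (fun x y => x - y = (1, 0) ∨ x - y = (0, 1) ∨ x - y = (1, 1))

/-!
The Shrikhande graph contains the induced 5-cycle `(0,0), (0,1), (0,2), (1,3), (1,0)`.

The rook's graph is `K₄ □ K₄`: each of its edges joins two cells in a common row or in a common
column. Along an induced cycle of length at least 4, two consecutive edges cannot both be row
edges (or both column edges), since their outer endpoints would then be adjacent. Colouring
each vertex of the cycle by the kind of edge leaving it is therefore a proper 2-colouring, so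
the cycle has even length.
-/

open SimpleGraph

theorem exists_isInducedCycle_iff {V : Type} {G : SimpleGraph V} {k : ℕ} :
    (∃ s, IsInducedCycle G s k) ↔ Nonempty (cycleGraph k ↪g G) := by
  constructor
  · rintro ⟨s, -, ⟨e⟩⟩
    exact ⟨(Embedding.induce _).comp e.symm.toEmbedding⟩
  · rintro ⟨f⟩
    refine ⟨Finset.univ.map f.toEmbedding, by simp, ?_⟩
    have hs : (↑(Finset.univ.map f.toEmbedding) : Set V) = Set.range f := by simp
    rw [hs]
    exact ⟨f.isoInduceRange.symm⟩

namespace SimpleGraph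

variable {α β : Type*}

theorem boxProd_top_adj {x y : α × β} :
    ((⊤ : SimpleGraph α) □ (⊤ : SimpleGraph β)).Adj x y ↔ (x.1 = y.1 ↔ x.2 ≠ y.2) := by
  rw [boxProd_adj]
  simp only [top_adj]
  tauto

theorem cycleGraph_embedding_boxProd_top_fst_succ_eq_iff {m : ℕ}
    (f : cycleGraph (m + 4) ↪g (⊤ : SimpleGraph α) □ (⊤ : SimpleGraph β)) (i : Fin (m + 4)) :
    (f (i + 1)).1 = (f (i + 1 + 1)).1 ↔ (f i).1 ≠ (f (i + 1)).1 := by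
  have h01 : (cycleGraph (m + 4)).Adj i (i + 1) := cycleGraph_adj.2 (.inr (add_sub_cancel_left i 1))
  have h12 : (cycleGraph (m + 4)).Adj (i + 1) (i + 1 + 1) :=
    cycleGraph_adj.2 (.inr (add_sub_cancel_left (i + 1) 1))
  have h02 : ¬ (cycleGraph (m + 4)).Adj i (i + 1 + 1) := by
    rw [cycleGraph_adj, add_assoc i, sub_add_cancel_left, add_sub_cancel_left,
      neg_eq_iff_add_eq_zero]
    simp (disch := omega) [Fin.ext_iff, Fin.val_add, Nat.mod_eq_of_lt]
  have hne : i ≠ i + 1 + 1 := by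
    rw [add_assoc i, ne_eq, left_eq_add]
    simp (disch := omega) [Fin.ext_iff, Fin.val_add, Nat.mod_eq_of_lt]
  rw [← f.map_adj_iff, boxProd_top_adj] at h01 h12 h02
  have hfne := f.injective.ne hne
  rw [Ne, Prod.ext_iff] at hfne
  grind

theorem even_of_cycleGraph_embedding_boxProd_top {n : ℕ} (hn : 4 ≤ n)
    (f : cycleGraph n ↪g (⊤ : SimpleGraph α) □ (⊤ : SimpleGraph β)) : Even n := by
  obtain ⟨m, rfl⟩ : ∃ m, n = m + 4 := ⟨n - 4, by omega⟩
  let c : Coloring (cycleGraph (m + 4)) Prop :=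
    Coloring.mk (fun i => (f i).1 = (f (i + 1)).1) fun {i j} hij => by
      rcases cycleGraph_adj.1 hij with h | h <;> rw [sub_eq_iff_eq_add'] at h <;> subst h
      · simp [cycleGraph_embedding_boxProd_top_fst_succ_eq_iff f j]
      · simp [cycleGraph_embedding_boxProd_top_fst_succ_eq_iff f i]
  have h2 : (cycleGraph (m + 4)).Colorable 2 := by simpa using c.colorable
  by_contra hodd
  have h3 := chromaticNumber_cycleGraph_of_odd _ (by omega) (Nat.not_even_iff_odd.1 hodd)
  have := h2.chromaticNumber_le
  rw [h3] at this
  norm_num at this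

end SimpleGraph

theorem rook_eq_boxProd_top : rook = (⊤ : SimpleGraph (Fin 4)) □ (⊤ : SimpleGraph (Fin 4)) := by
  ext x y
  simp only [rook, fromRel_adj, boxProd_adj, top_adj, ne_eq, Prod.ext_iff]
  tauto

def shrikhandeCycle : cycleGraph 5 ↪g shrikhande where
  toFun := ![(0, 0), (0, 1), (0, 2), (1, 3), (1, 0)]
  inj' := by decide
  map_rel_iff' := by
    intro a b
    simp only [shrikhande, fromRel_adj]
    revert a b
    decide

/-- The Shrikhande graph contains an induced 5-cycle; the Rook's
4×4 graph contains none. -/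
theorem stmt_13 :
    (∃ s : Finset (ZMod 4 × ZMod 4), IsInducedCycle shrikhande s 5) ∧
    (¬ ∃ s : Finset (Fin 4 × Fin 4), IsInducedCycle rook s 5) := by
  refine ⟨exists_isInducedCycle_iff.2 ⟨shrikhandeCycle⟩, fun h => ?_⟩
  obtain ⟨f⟩ := exists_isInducedCycle_iff.1 h
  rw [rook_eq_boxProd_top] at f
  exact Nat.not_even_iff_odd.2 (by decide) (even_of_cycleGraph_embedding_boxProd_top (by norm_num) f)
end

section
/- Let CWN layers compute h^{t+1}_σ = U(h^t_σ, AGG over boundary messages, AGG over upper-adjacency messages) as functions of the cell features and adjacency structure, and let c^t be the CWL colouring with injective hash. Then the CWN feature colouring is refined by c^t: for all cells σ, τ in any complexes, c^{t+1}_σ = c^{t+1}_τ implies h^{t+1}_σ = h^{t+1}_τ (CWNs are at most as powerful as CWL). Moreover, if all the aggregation, message and update functions are injective on the relevant multisets, then h^t refines c^t, so CWNs with injective aggregators are exactly as powerful as CWL. -/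
/-- The upper-adjacency pairs `(τ, δ)` of a cell `σ`: `σ ≺ δ` and `τ ≺ δ`. -/
def upPairs (X : CC) (σ : X.Cell) : Finset (X.Cell × X.Cell) :=
  (Finset.univ ×ˢ Finset.univ).filter
    (fun p : X.Cell × X.Cell => X.covers σ p.2 ∧ X.covers p.1 p.2)

/-- If two multisets have equal images under `f`/`g`, and equal `f`/`g` values
force equal `f'`/`g'` values, then the `f'`/`g'` images are also equal. -/
lemma map_transfer {α β γ ε : Type*} [DecidableEq β] (f : α → ε) (g : β → ε) (f' : α → γ) (g' : β → γ) :
    ∀ (s : Multiset α) (t : Multiset β), s.map f = t.map g →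
    (∀ a ∈ s, ∀ b ∈ t, f a = g b → f' a = g' b) → s.map f' = t.map g' := by
  intro s
  induction s using Multiset.induction with
  | empty =>
    intro t ht _
    simp only [Multiset.map_zero] at ht ⊢
    rw [Eq.comm, Multiset.map_eq_zero] at ht
    simp [ht]
  | cons a s ih =>
    intro t ht H
    have hmem : f a ∈ t.map g := by rw [← ht]; simp
    obtain ⟨b, hb, hgb⟩ := Multiset.mem_map.mp hmem
    have ht' : t = b ::ₘ t.erase b := (Multiset.cons_erase hb).symm
    rw [ht', Multiset.map_cons, Multiset.map_cons, ← hgb, Multiset.cons_inj_right] at ht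
    have hrest : s.map f' = (t.erase b).map g' := by
      refine ih _ ht ?_
      intro a' ha' b' hb' hfg
      exact H a' (Multiset.mem_cons_of_mem ha') b'
        (Multiset.mem_of_mem_erase hb') hfg
    rw [ht', Multiset.map_cons, Multiset.map_cons, hrest,
      H a (Multiset.mem_cons_self a s) b hb hgb.symm]

/-- Let `h` be the features computed by a CW Network with layers
`h^{t+1}_σ = U(h^t_σ, AGG_B of boundary messages, AGG_↑ of upper messages)`
from a constant initialisation, and let `c` be the CWL colouring (injective
hash of the cell's colour with the boundary and upper colour multisets, from a
matching constant initialisation). Then the CWL colouring refines the CWN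
colouring (CWNs are at most as powerful as CWL), and if the update, aggregation
and message functions are all injective then the CWN colouring also refines the
CWL colouring (CWNs are then exactly as powerful as CWL). -/
theorem stmt_15 {F Msg Msg' AggB AggUp Colour : Type}
    (MB : F → F → Msg) (Mup : F → F → F → Msg')
    (AGGB : Multiset Msg → AggB) (AGGup : Multiset Msg' → AggUp)
    (U : F → AggB → AggUp → F)
    (h : ∀ X : CC, ℕ → X.Cell → F)
    (hinit : ∀ (X Y : CC) (σ : X.Cell) (τ : Y.Cell), h X 0 σ = h Y 0 τ)
    (hupd : ∀ (X : CC) (t : ℕ) (σ : X.Cell),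
      h X (t + 1) σ =
        U (h X t σ)
          (AGGB ((X.bd σ).val.map (fun τ => MB (h X t σ) (h X t τ))))
          (AGGup ((upPairs X σ).val.map
            (fun p => Mup (h X t σ) (h X t p.1) (h X t p.2)))))
    (c : ∀ X : CC, ℕ → X.Cell → Colour) (hc : IsCWLBU c) :
    (∀ (X Y : CC) (σ : X.Cell) (τ : Y.Cell) (t : ℕ),
      c X t σ = c Y t τ → h X t σ = h Y t τ) ∧
    ((Function.Injective (fun p : F × AggB × AggUp => U p.1 p.2.1 p.2.2) ∧
        Function.Injective AGGB ∧ Function.Injective AGGup ∧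
        Function.Injective (fun p : F × F => MB p.1 p.2) ∧
        Function.Injective (fun p : F × F × F => Mup p.1 p.2.1 p.2.2)) →
      ∀ (X Y : CC) (σ : X.Cell) (τ : Y.Cell) (t : ℕ),
        h X t σ = h Y t τ → c X t σ = c Y t τ) := by
  constructor
  · intro X Y σ τ t
    induction t generalizing X Y σ τ with
    | zero => intro _; exact hinit X Y σ τ
    | succ t ih =>
      intro hct
      rw [hc.2 X Y σ τ t] at hct
      obtain ⟨h0, hB, hU⟩ := hct
      have e1 : h X t σ = h Y t τ := ih X Y σ τ h0
      have e2 : (X.bd σ).val.map (fun τ' => MB (h X t σ) (h X t τ')) =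
          (Y.bd τ).val.map (fun τ' => MB (h Y t τ) (h Y t τ')) := by
        refine map_transfer (c X t) (c Y t) _ _ _ _ hB ?_
        intro a _ b _ hab
        rw [e1, ih X Y a b hab]
      have e3 : (upPairs X σ).val.map
            (fun p => Mup (h X t σ) (h X t p.1) (h X t p.2)) =
          (upPairs Y τ).val.map
            (fun p => Mup (h Y t τ) (h Y t p.1) (h Y t p.2)) := by
        have hU' : (upPairs X σ).val.map (fun p => (c X t p.1, c X t p.2)) =
            (upPairs Y τ).val.map (fun p => (c Y t p.1, c Y t p.2)) := hU
        refine map_transfer (fun p => (c X t p.1, c X t p.2))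
          (fun p => (c Y t p.1, c Y t p.2)) _ _ _ _ hU' ?_
        intro a _ b _ hab
        simp only [Prod.mk.injEq] at hab
        rw [e1, ih X Y a.1 b.1 hab.1, ih X Y a.2 b.2 hab.2]
      rw [hupd, hupd, e2, e3, e1]
  · rintro ⟨hUinj, hAB, hAU, hMB, hMU⟩ X Y σ τ t
    induction t generalizing X Y σ τ with
    | zero => intro _; exact hc.1 X Y σ τ
    | succ t ih =>
      intro hh
      rw [hupd, hupd] at hh
      have h3 := hUinj (a₁ := (h X t σ,
          AGGB ((X.bd σ).val.map (fun τ' => MB (h X t σ) (h X t τ'))),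
          AGGup ((upPairs X σ).val.map
            (fun p => Mup (h X t σ) (h X t p.1) (h X t p.2)))))
        (a₂ := (h Y t τ,
          AGGB ((Y.bd τ).val.map (fun τ' => MB (h Y t τ) (h Y t τ'))),
          AGGup ((upPairs Y τ).val.map
            (fun p => Mup (h Y t τ) (h Y t p.1) (h Y t p.2))))) hh
      simp only [Prod.mk.injEq] at h3
      obtain ⟨e0, eB, eU⟩ := h3
      have cBeq : (X.bd σ).val.map (c X t) = (Y.bd τ).val.map (c Y t) := by
        refine map_transfer _ _ _ _ _ _ (hAB eB) ?_
        intro a _ b _ hab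
        have hp := hMB (a₁ := (h X t σ, h X t a)) (a₂ := (h Y t τ, h Y t b)) hab
        exact ih X Y a b (congrArg Prod.snd hp)
      have cUeq : (upPairs X σ).val.map (fun p => (c X t p.1, c X t p.2)) =
          (upPairs Y τ).val.map (fun p => (c Y t p.1, c Y t p.2)) := by
        refine map_transfer _ _ _ _ _ _ (hAU eU) ?_
        intro a _ b _ hab
        have hp := hMU (a₁ := (h X t σ, h X t a.1, h X t a.2))
          (a₂ := (h Y t τ, h Y t b.1, h Y t b.2)) hab
        simp only [Prod.mk.injEq] at hp
        rw [Prod.mk.injEq]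
        exact ⟨ih X Y a.1 b.1 hp.2.1, ih X Y a.2 b.2 hp.2.2⟩
      rw [hc.2 X Y σ τ t]
      exact ⟨ih X Y σ τ e0, cBeq, cUeq⟩
end
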